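/- Let p > 2 be a prime and τ = (q_1^{s_1},…,q_c^{s_c}) a type with q_1 > ⋯ > q_c ≥ 1 and each s_v > 0; let n = s_1 + ⋯ + s_c, e = q_1, n_0 = 0 and n_v = s_1 + ⋯ + s_v. Fix u with n_{b−1} ≤ u < n_b for some 1 ≤ b ≤ c, and z with q_b ≤ z ≤ e. Define the type ν_{u,z} = (z, q_b^{n_b−u−1}, q_{b+1}^{s_{b+1}}, …, q_c^{s_c}). Then ν_{u,z} ∈ Ξ_{u,z}, and ν_{u,z} ≤ α for every α ∈ Ξ_{u,z}; i.e. ν_{u,z} is the minimum element of Ξ_{u,z}. -/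

import Mathlib

/-- A (generalized) nonempty type: a weakly decreasing tuple of positive integers,
represented as a list. -/
def IsType (a : List ℕ) : Prop :=
  a ≠ [] ∧ List.Chain' (· ≥ ·) a ∧ ∀ x ∈ a, 1 ≤ x

/-- `(ℓ_1,…,ℓ_m) ≤ (k_1,…,k_n)` iff `m ≤ n` and `ℓ_i ≤ k_i` for all `i ≤ m`. -/
def TypeLe (a t : List ℕ) : Prop :=
  a.length ≤ t.length ∧ ∀ i < a.length, a.getD i 0 ≤ t.getD i 0

/-- `f^τ_α(j) = max ({ i ∈ {1,…,m} : ℓ_i ≥ k_j } ∪ {0})`, indices 1-based. -/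
def fTA (t a : List ℕ) (j : ℕ) : ℕ :=
  ((Finset.Icc 1 a.length).filter (fun i => t.getD (j - 1) 0 ≤ a.getD (i - 1) 0)).sup id

/-- `u^τ_α = max { j − f^τ_α(j) : 1 ≤ j ≤ n }`. -/
def uTA (t a : List ℕ) : ℕ :=
  (Finset.Icc 1 t.length).sup (fun j => j - fTA t a j)

/-- The type `τ = (q_1^{s_1},…,q_c^{s_c})` as a list: `s v` copies of `q v`, in order. -/
def tauList (c : ℕ) (q s : Fin c → ℕ) : List ℕ :=
  (List.finRange c).flatMap (fun v => List.replicate (s v) (q v))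

/-- Partial sums `n_b = s_1 + ⋯ + s_b` (here `b : ℕ`, `nPartial c s 0 = 0`). -/
def nPartial (c : ℕ) (s : Fin c → ℕ) (b : ℕ) : ℕ :=
  ∑ v : Fin c, if (v : ℕ) < b then s v else 0

/-- `ν_{u,z} = (z, q_b^{n_b−u−1}, q_{b+1}^{s_{b+1}}, …, q_c^{s_c})`, where `b : Fin c`
represents the paper's `b` (so `n_b = nPartial c s (b+1)`). -/
def nuList (c : ℕ) (q s : Fin c → ℕ) (b : Fin c) (u z : ℕ) : List ℕ :=
  z :: (List.replicate (nPartial c s ((b : ℕ) + 1) - u - 1) (q b) ++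
    ((List.finRange c).filter (fun v => b < v)).flatMap
      (fun v => List.replicate (s v) (q v)))

namespace NuProof

/-- general helper -/
lemma getD_drop (l : List ℕ) (k i : ℕ) : (l.drop k).getD i 0 = l.getD (k + i) 0 := by
  simp [List.getD_eq_getElem?_getD, List.getElem?_drop]

lemma getD_replicate' {n : ℕ} (x : ℕ) {i : ℕ} (h : i < n) :
    (List.replicate n x).getD i 0 = x := by
  simp [List.getD_eq_getElem?_getD, List.getElem?_replicate, h]

lemma headI_eq_getD (l : List ℕ) (h : l ≠ []) : l.headI = l.getD 0 0 := by
  cases l with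
  | nil => exact absurd rfl h
  | cons a t => rfl

lemma head?_eq_getD {l : List ℕ} {y : ℕ} (h : y ∈ l.head?) : l.getD 0 0 = y := by
  cases l with
  | nil => simp at h
  | cons a t => simp_all

lemma type_getD_antitone {a : List ℕ} (hc : List.Chain' (· ≥ ·) a) {i j : ℕ} (hij : i ≤ j) :
    a.getD j 0 ≤ a.getD i 0 := by
  rcases lt_or_ge j a.length with hj | hj
  · have hi : i < a.length := lt_of_le_of_lt hij hj
    rcases eq_or_lt_of_le hij with rfl | hlt
    · exact le_refl _
    · have hp := List.isChain_iff_pairwise.mp hc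
      have := List.pairwise_iff_getElem.mp hp i j hi hj hlt
      rw [List.getD_eq_getElem _ _ hi, List.getD_eq_getElem _ _ hj]
      exact this
  · rw [List.getD_eq_default _ _ hj]
    exact Nat.zero_le _

section Tau

variable (c : ℕ) (q s : Fin c → ℕ)

/-- flatMap helper -/
def T (L : List (Fin c)) : List ℕ := L.flatMap (fun v => List.replicate (s v) (q v))

lemma nPartial_zero : nPartial c s 0 = 0 := by simp [nPartial]

lemma nPartial_succ (k : ℕ) (hk : k < c) :
    nPartial c s (k + 1) = nPartial c s k + s ⟨k, hk⟩ := by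
  unfold nPartial
  have : ∀ v : Fin c, (if (v : ℕ) < k + 1 then s v else 0)
      = (if (v : ℕ) < k then s v else 0) + (if v = (⟨k, hk⟩ : Fin c) then s v else 0) := by
    intro v
    have hv : v = (⟨k, hk⟩ : Fin c) ↔ (v : ℕ) = k := by
      constructor
      · intro h; rw [h]
      · intro h; exact Fin.ext h
    split_ifs with h1 h2 h3 h2 h3 <;> simp_all <;> omega
  rw [Finset.sum_congr rfl (fun v _ => this v), Finset.sum_add_distrib,
    Finset.sum_ite_eq' Finset.univ (⟨k, hk⟩ : Fin c) s]
  simp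

lemma nPartial_mono : Monotone (nPartial c s) := by
  intro a b hab
  apply Finset.sum_le_sum
  intro v _
  split_ifs with h1 h2 h2 <;> omega

lemma length_T_take : ∀ k, k ≤ c →
    (T c q s ((List.finRange c).take k)).length = nPartial c s k := by
  intro k
  induction k with
  | zero => intro _; simp [T, nPartial_zero]
  | succ k ih =>
    intro hk
    have hk' : k < c := hk
    have hfr : (List.finRange c)[k]? = some (⟨k, hk'⟩ : Fin c) := by
      rw [List.getElem?_eq_getElem (by simpa using hk')]
      simp [List.getElem_finRange, Fin.ext_iff]
    rw [List.take_succ, hfr]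
    rw [show T c q s ((List.finRange c).take k ++ (some (⟨k, hk'⟩ : Fin c)).toList)
        = T c q s ((List.finRange c).take k) ++ List.replicate (s ⟨k, hk'⟩) (q ⟨k, hk'⟩) from by
      simp [T, List.flatMap_append]]
    rw [List.length_append, ih (le_of_lt hk'), nPartial_succ c s k hk', List.length_replicate]

lemma length_tau : (tauList c q s).length = nPartial c s c := by
  have := length_T_take c q s c (le_refl c)
  rwa [List.take_of_length_le (by simp)] at this

lemma tau_decomp (b : Fin c) :
    tauList c q s = T c q s ((List.finRange c).take (b : ℕ)) ++
      (List.replicate (s b) (q b) ++ T c q s ((List.finRange c).drop ((b : ℕ) + 1))) := by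
  have hfr : (List.finRange c)[(b : ℕ)]? = some b := by
    rw [List.getElem?_eq_getElem (by simpa using b.isLt)]
    simp [List.getElem_finRange, Fin.ext_iff]
  conv_lhs => rw [show tauList c q s = T c q s (List.finRange c) from rfl,
    ← List.take_append_drop ((b : ℕ) + 1) (List.finRange c)]
  rw [List.take_succ, hfr]
  simp [T, List.flatMap_append, List.append_assoc]

lemma getD_tau (b : Fin c) (j : ℕ) (h1 : nPartial c s (b : ℕ) ≤ j)
    (h2 : j < nPartial c s ((b : ℕ) + 1)) :
    (tauList c q s).getD j 0 = q b := by
  have hlt : j - nPartial c s (b : ℕ) < s b := by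
    have := nPartial_succ c s (b : ℕ) b.isLt
    simp only [Fin.eta] at this
    omega
  rw [tau_decomp c q s b,
    List.getD_append_right _ _ _ _ (by rw [length_T_take c q s _ (le_of_lt b.isLt)]; exact h1),
    length_T_take c q s _ (le_of_lt b.isLt),
    List.getD_append _ _ _ _ (by simpa using hlt)]
  exact getD_replicate' _ hlt

lemma exists_block (j : ℕ) (hj : j < nPartial c s c) :
    ∃ v : Fin c, nPartial c s (v : ℕ) ≤ j ∧ j < nPartial c s ((v : ℕ) + 1) := by
  have hc : 0 < c := by
    by_contra h
    push_neg at h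
    interval_cases c
    simp [nPartial_zero] at hj
  have hex : ∃ k, j < nPartial c s (k + 1) :=
    ⟨c - 1, by rwa [Nat.sub_add_cancel hc]⟩
  have hk1 : j < nPartial c s (Nat.find hex + 1) := Nat.find_spec hex
  have hkc : Nat.find hex < c := by
    by_contra h
    push_neg at h
    have := Nat.find_min hex (show c - 1 < Nat.find hex by omega)
    exact this (by rwa [Nat.sub_add_cancel hc])
  refine ⟨⟨Nat.find hex, hkc⟩, ?_, hk1⟩
  rcases Nat.eq_zero_or_pos (Nat.find hex) with h0 | h0
  · simp only [h0, nPartial_zero]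
    exact Nat.zero_le j
  · have := Nat.find_min hex (show Nat.find hex - 1 < Nat.find hex by omega)
    push_neg at this
    show nPartial c s (Nat.find hex) ≤ j
    rwa [Nat.sub_add_cancel h0] at this

variable (hq : StrictAnti q) (hq1 : ∀ v, 1 ≤ q v)

include hq hq1 in
lemma getD_tau_lt (b : Fin c) (j : ℕ) (h : nPartial c s ((b : ℕ) + 1) ≤ j) :
    (tauList c q s).getD j 0 < q b := by
  rcases lt_or_ge j (nPartial c s c) with hj | hj
  · obtain ⟨v, hv1, hv2⟩ := exists_block c s j hj
    rw [getD_tau c q s v j hv1 hv2]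
    apply hq
    have : ¬ ((v : ℕ) + 1 ≤ (b : ℕ) + 1) := by
      intro hle
      have := nPartial_mono c s hle
      omega
    exact Fin.lt_def.mpr (by omega)
  · rw [List.getD_eq_default _ _ (by rw [length_tau]; exact hj)]
    exact lt_of_lt_of_le Nat.zero_lt_one (by
      have := hq1 b
      omega)

include hq1 in
lemma mem_tau_pos : ∀ x ∈ tauList c q s, 1 ≤ x := by
  intro x hx
  rw [tauList, List.mem_flatMap] at hx
  obtain ⟨v, _, hx⟩ := hx
  rw [List.eq_of_mem_replicate hx]
  exact hq1 v

include hq in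
lemma chain'_tau : List.Chain' (· ≥ ·) (tauList c q s) := by
  rw [List.Chain', List.isChain_iff_pairwise, List.pairwise_iff_getElem]
  intro i j hi hj hij
  rw [← List.getD_eq_getElem _ 0 hi, ← List.getD_eq_getElem _ 0 hj]
  have hi' : i < nPartial c s c := by rwa [length_tau] at hi
  have hj' : j < nPartial c s c := by rwa [length_tau] at hj
  obtain ⟨vi, hvi1, hvi2⟩ := exists_block c s i hi'
  obtain ⟨vj, hvj1, hvj2⟩ := exists_block c s j hj'
  rw [getD_tau c q s vi i hvi1 hvi2, getD_tau c q s vj j hvj1 hvj2]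
  apply hq.antitone
  by_contra h
  push_neg at h
  have h' : (vj : ℕ) + 1 ≤ (vi : ℕ) := Fin.lt_def.mp h
  have := nPartial_mono c s h'
  omega

end Tau

lemma filter_lt_eq_drop : ∀ (c k : ℕ),
    (List.finRange c).filter (fun (v : Fin c) => decide (k < (v : ℕ))) =
      (List.finRange c).drop (k + 1) := by
  intro c
  induction c with
  | zero => intro k; simp
  | succ c ih =>
    intro k
    rw [List.finRange_succ, List.drop_succ_cons, List.filter_cons,
      if_neg (by simp : ¬ (decide (k < ((0 : Fin (c+1)) : ℕ)) = true)), List.filter_map]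
    cases k with
    | zero =>
      have : List.filter ((fun (v : Fin (c+1)) => decide (0 < (v : ℕ))) ∘ Fin.succ) (List.finRange c) =
          List.finRange c := by
        apply List.filter_eq_self.mpr
        intro v _
        simp
      rw [this, List.drop_zero]
    | succ k =>
      have : List.filter ((fun (v : Fin (c+1)) => decide (k + 1 < (v : ℕ))) ∘ Fin.succ) (List.finRange c) =
          List.filter (fun (v : Fin c) => decide (k < (v : ℕ))) (List.finRange c) := by
        apply List.filter_congr
        intro v _
        simp only [Function.comp_apply, Fin.val_succ, decide_eq_decide]
        omega
      rw [this, ih k, List.map_drop]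

lemma nu_eq (c : ℕ) (q s : Fin c → ℕ) (b : Fin c) (u z : ℕ)
    (hu1 : nPartial c s (b : ℕ) ≤ u) (hu2 : u < nPartial c s ((b : ℕ) + 1)) :
    nuList c q s b u z = z :: (tauList c q s).drop (u + 1) := by
  have hA : (T c q s ((List.finRange c).take (b : ℕ))).length = nPartial c s (b : ℕ) :=
    length_T_take c q s _ (le_of_lt b.isLt)
  have hsb : nPartial c s ((b : ℕ) + 1) = nPartial c s (b : ℕ) + s b := by
    have := nPartial_succ c s (b : ℕ) b.isLt
    simpa using this
  have hfilter : (List.finRange c).filter (fun v => b < v) =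
      (List.finRange c).drop ((b : ℕ) + 1) := by
    rw [← filter_lt_eq_drop c (b : ℕ)]
    apply List.filter_congr
    intro v _
    simp only [decide_eq_decide]
    exact Fin.lt_def
  have hdrop : (tauList c q s).drop (u + 1) =
      List.replicate (nPartial c s ((b : ℕ) + 1) - u - 1) (q b) ++
        T c q s ((List.finRange c).drop ((b : ℕ) + 1)) := by
    rw [tau_decomp c q s b, List.drop_append,
      List.drop_eq_nil_of_le
        (show (T c q s ((List.finRange c).take (b : ℕ))).length ≤ u + 1 by rw [hA]; omega),
      List.nil_append, List.drop_append, List.drop_replicate, hA,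
      show u + 1 - nPartial c s (b : ℕ) - (List.replicate (s b) (q b)).length = 0 from by
        simp only [List.length_replicate]; omega,
      List.drop_zero,
      show s b - (u + 1 - nPartial c s (b : ℕ)) = nPartial c s ((b : ℕ) + 1) - u - 1 from by
        omega]
  rw [nuList, hfilter, hdrop]
  rfl

end NuProof

open NuProof in
/-- Let `p > 2` be a prime, `τ = (q_1^{s_1},…,q_c^{s_c})` a type with
`q_1 > ⋯ > q_c ≥ 1`, `s_v > 0`.  Fix `u` with `n_{b−1} ≤ u < n_b`, and `z` with
`q_b ≤ z ≤ e = q_1`.  Then `ν_{u,z}` belongs to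
`Ξ_{u,z} = {α : α ≤ τ, u^τ_α = u, e(α) = z}` and is its minimum element. -/
theorem nu_is_minimum_of_Xi
    (p : ℕ) (hp : p.Prime) (hp2 : 2 < p)
    (c : ℕ) (q s : Fin c → ℕ)
    (hq : StrictAnti q) (hq1 : ∀ v, 1 ≤ q v) (hs : ∀ v, 0 < s v)
    (b : Fin c) (u z : ℕ)
    (hu1 : nPartial c s (b : ℕ) ≤ u) (hu2 : u < nPartial c s ((b : ℕ) + 1))
    (hz1 : q b ≤ z) (hz2 : z ≤ q ⟨0, b.pos⟩) :
    (IsType (nuList c q s b u z) ∧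
      TypeLe (nuList c q s b u z) (tauList c q s) ∧
      uTA (tauList c q s) (nuList c q s b u z) = u ∧
      (nuList c q s b u z).headI = z) ∧
    ∀ a : List ℕ, IsType a → TypeLe a (tauList c q s) →
      uTA (tauList c q s) a = u → a.headI = z →
      TypeLe (nuList c q s b u z) a := by
  set τ := tauList c q s with hτ
  set N := nPartial c s c with hN
  have hlenτ : τ.length = N := length_tau c q s
  have hbc : (b : ℕ) + 1 ≤ c := b.isLt
  have huN : u < N := lt_of_lt_of_le hu2 (nPartial_mono c s hbc)
  have hnu : nuList c q s b u z = z :: τ.drop (u + 1) := nu_eq c q s b u z hu1 hu2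
  have hlenν : (nuList c q s b u z).length = N - u := by
    rw [hnu]
    simp only [List.length_cons, List.length_drop, hlenτ]
    omega
  have hνgetD0 : (nuList c q s b u z).getD 0 0 = z := by rw [hnu]; rfl
  have hνgetDsucc : ∀ k, (nuList c q s b u z).getD (k + 1) 0 = τ.getD (u + 1 + k) 0 := by
    intro k
    rw [hnu]
    show (τ.drop (u + 1)).getD k 0 = _
    exact getD_drop τ (u + 1) k
  have hτu : τ.getD u 0 = q b := getD_tau c q s b u hu1 hu2
  have hchainτ : List.Chain' (· ≥ ·) τ := chain'_tau c q s hq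
  have hτ0 : τ.getD 0 0 = q ⟨0, b.pos⟩ := by
    apply getD_tau c q s ⟨0, b.pos⟩ 0
    · simp [nPartial_zero]
    · have := nPartial_succ c s 0 b.pos
      rw [this, nPartial_zero]
      simpa using hs ⟨0, b.pos⟩
  have hfirst : IsType (nuList c q s b u z) ∧
      TypeLe (nuList c q s b u z) τ ∧
      uTA τ (nuList c q s b u z) = u ∧
      (nuList c q s b u z).headI = z := by
    refine ⟨⟨by rw [hnu]; exact List.cons_ne_nil _ _, ?_, ?_⟩, ⟨?_, ?_⟩, ?_, by rw [hnu]; rfl⟩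
    · -- Chain'
      rw [hnu, List.Chain', List.isChain_cons]
      constructor
      · intro y hy
        have := head?_eq_getD hy
        rw [getD_drop τ (u + 1) 0] at this
        have h1 : τ.getD (u + 1 + 0) 0 ≤ τ.getD u 0 := type_getD_antitone hchainτ (by omega)
        rw [hτu] at h1
        rw [← this]
        exact le_trans h1 hz1
      · exact hchainτ.suffix (List.drop_suffix _ _)
    · -- positivity
      rw [hnu]
      intro x hx
      rcases List.mem_cons.mp hx with rfl | hx
      · exact le_trans (hq1 b) hz1
      · exact mem_tau_pos c q s hq1 x ((List.drop_suffix _ _).subset hx)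
    · -- length ≤
      rw [hlenν, hlenτ]
      omega
    · -- entrywise ≤ τ
      intro i hi
      rw [hlenν] at hi
      cases i with
      | zero =>
        rw [hνgetD0, hτ0]
        exact hz2
      | succ k =>
        rw [hνgetDsucc k]
        exact type_getD_antitone hchainτ (by omega)
    · -- uTA = u
      apply le_antisymm
      · apply Finset.sup_le
        intro j hj
        rw [Finset.mem_Icc, hlenτ] at hj
        by_cases hju : j ≤ u
        · omega
        · push_neg at hju
          have hmem : j - u ∈ (Finset.Icc 1 (nuList c q s b u z).length).filter
              (fun i => τ.getD (j - 1) 0 ≤ (nuList c q s b u z).getD (i - 1) 0) := by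
            rw [Finset.mem_filter, Finset.mem_Icc, hlenν]
            refine ⟨⟨by omega, by omega⟩, ?_⟩
            rcases Nat.eq_or_lt_of_le hju with hj1 | hj1
            · have : j - u - 1 = 0 := by omega
              rw [this, hνgetD0, show j - 1 = u by omega, hτu]
              exact hz1
            · have : j - u - 1 = (j - u - 2) + 1 := by omega
              rw [this, hνgetDsucc]
              have : u + 1 + (j - u - 2) = j - 1 := by omega
              rw [this]
          have := Finset.le_sup (f := id) hmem
          simp only [id] at this
          show j - fTA τ (nuList c q s b u z) j ≤ u
          rw [fTA]
          omega
      · have hjmem : nPartial c s ((b : ℕ) + 1) ∈ Finset.Icc 1 τ.length := by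
          rw [Finset.mem_Icc, hlenτ]
          constructor
          · omega
          · exact nPartial_mono c s hbc
        have hf : fTA τ (nuList c q s b u z) (nPartial c s ((b : ℕ) + 1)) ≤
            nPartial c s ((b : ℕ) + 1) - u := by
          apply Finset.sup_le
          intro i hi
          rw [Finset.mem_filter, Finset.mem_Icc, hlenν] at hi
          obtain ⟨⟨hi1, hi2⟩, hcond⟩ := hi
          by_contra hcon
          push_neg at hcon
          simp only [id] at hcon
          have hi3 : i - 1 = (i - 2) + 1 := by omega
          rw [hi3, hνgetDsucc] at hcond
          have hlt : τ.getD (u + 1 + (i - 2)) 0 < q b :=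
            getD_tau_lt c q s hq hq1 b _ (by omega)
          rw [show (nPartial c s ((b : ℕ) + 1)) - 1 = u + (nPartial c s ((b:ℕ)+1) - u - 1) by omega] at hcond
          have hqb : τ.getD (nPartial c s ((b : ℕ) + 1) - 1) 0 = q b := by
            apply getD_tau c q s b <;> omega
          rw [show u + (nPartial c s ((b:ℕ)+1) - u - 1) = nPartial c s ((b:ℕ)+1) - 1 by omega] at hcond
          rw [hqb] at hcond
          omega
        have hle' : nPartial c s ((b : ℕ) + 1) - fTA τ (nuList c q s b u z) (nPartial c s ((b : ℕ) + 1))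
            ≤ uTA τ (nuList c q s b u z) :=
          Finset.le_sup (f := fun j => j - fTA τ (nuList c q s b u z) j) hjmem
        omega
  refine ⟨hfirst, ?_⟩
  intro a ha hale hua hahead
  obtain ⟨hane, hach, hapos⟩ := ha
  have hf : ∀ j, 1 ≤ j → j ≤ N → j - u ≤ fTA τ a j := by
    intro j h1 h2
    have hmem : j ∈ Finset.Icc 1 τ.length := by rw [Finset.mem_Icc, hlenτ]; exact ⟨h1, h2⟩
    have h3 : j - fTA τ a j ≤ uTA τ a := Finset.le_sup (f := fun j => j - fTA τ a j) hmem
    rw [hua] at h3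
    omega
  have hfa_len : ∀ j, fTA τ a j ≤ a.length := by
    intro j
    apply Finset.sup_le
    intro i hi
    rw [Finset.mem_filter, Finset.mem_Icc] at hi
    exact hi.1.2
  constructor
  · rw [hlenν]
    have h1 := hf N (by omega) (le_refl N)
    have h2 := hfa_len N
    omega
  · intro i hi
    rw [hlenν] at hi
    cases i with
    | zero =>
      rw [hνgetD0, ← headI_eq_getD a hane, hahead]
    | succ k =>
      rw [hνgetDsucc k]
      set j := u + k + 2 with hj
      have hjN : j ≤ N := by omega
      have hfj := hf j (by omega) hjN
      set F := (Finset.Icc 1 a.length).filter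
          (fun i => τ.getD (j - 1) 0 ≤ a.getD (i - 1) 0) with hF
      have hFne : F.Nonempty := by
        by_contra h
        rw [Finset.not_nonempty_iff_eq_empty] at h
        have h0 : fTA τ a j = 0 := by
          rw [show fTA τ a j = F.sup id from rfl, h]
          simp
        omega
      obtain ⟨i0, hi0F, hi0⟩ := Finset.exists_mem_eq_sup F hFne id
      rw [hF, Finset.mem_filter, Finset.mem_Icc] at hi0F
      obtain ⟨⟨hi01, hi02⟩, hcond⟩ := hi0F
      have hfval : fTA τ a j = i0 := hi0
      have hi0big : k + 2 ≤ i0 := by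
        rw [← hfval]
        omega
      have hmono : a.getD (i0 - 1) 0 ≤ a.getD (k + 1) 0 :=
        type_getD_antitone hach (by omega)
      have hidx : j - 1 = u + 1 + k := by omega
      rw [hidx] at hcond
      exact le_trans hcond hmono
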